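/- For every a.e. strongly measurable x : Ω → A the set spm(x) is non-empty: there exists a measurable a : Ω → ℂ such that for every measurable set S ⊆ Ω with μ(S) > 0 there is no a.e. strongly measurable y : Ω → A with (a(ω)·1 − x(ω))y(ω) = y(ω)(a(ω)·1 − x(ω)) = 1 for a.e. ω ∈ S. (Non-emptiness part of Theorem 2.5, specialized to the Banach–Kantorovich algebra L⁰(Ω, A), where nonzero idempotents correspond to indicators of positive-measure sets.) -/

import Mathlib

/-!
Since `x` agrees a.e. with a strongly measurable `g`, it suffices to pick `a ω` in the
spectrum of `g ω` measurably in `ω`. The spectrum is upper semicontinuous, so the set of `ω`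
for which `σ(g ω)` meets a given closed ball is measurable; a Kuratowski–Ryll-Nardzewski
argument then produces the selection as the uniform limit of measurable functions `b m` with
values in a countable dense set, chosen so that `σ(g ω)` meets the ball of radius `2⁻ᵐ` about
`b m ω` and consecutive ones are `2⁻ᵐ⁺¹`-close.
-/

open MeasureTheory Filter Metric

/-- `a ∈ spm(x)`: for every measurable set `S` of positive measure there is no a.e.
strongly measurable local inverse of `a·1 − x` on `S`. -/
def MemSpm {Ω : Type*} [MeasurableSpace Ω] (μ : Measure Ω)
    {A : Type*} [NormedRing A] [NormedAlgebra ℂ A]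
    (x : Ω → A) (a : Ω → ℂ) : Prop :=
  ∀ S : Set Ω, MeasurableSet S → 0 < μ S →
    ¬ ∃ y : Ω → A, AEStronglyMeasurable y μ ∧
      ∀ᵐ ω ∂μ, ω ∈ S →
        ((a ω • (1 : A) - x ω) * y ω = 1 ∧ y ω * (a ω • (1 : A) - x ω) = 1)

section MeasurableSelection

variable {Ω X : Type*} [MeasurableSpace Ω] [MeasurableSpace X]

theorem exists_measurable_forall_of_exists_seq (q : ℕ → X) {P : Ω → X → Prop}
    (hP : ∀ k, MeasurableSet {ω | P ω (q k)}) (hex : ∀ ω, ∃ k, P ω (q k)) :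
    ∃ b : Ω → X, Measurable b ∧ ∀ ω, P ω (b ω) := by
  classical
  exact ⟨fun ω => q (Nat.find (hex ω)), measurable_from_nat.comp (measurable_find hex hP),
    fun ω => Nat.find_spec (hex ω)⟩

variable [MetricSpace X] [TopologicalSpace.SeparableSpace X] [Nonempty X]
  [BorelSpace X] {Φ : Ω → Set X}

theorem exists_measurable_closedBall_inter_nonempty
    (hΦ : ∀ x r, MeasurableSet {ω | (Φ ω ∩ closedBall x r).Nonempty})
    {c : Ω → X} (hc : Measurable c) {r s : ℝ} (hr : 0 < r)
    (hcΦ : ∀ ω, (Φ ω ∩ closedBall (c ω) s).Nonempty) :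
    ∃ b : Ω → X, Measurable b ∧ (∀ ω, (Φ ω ∩ closedBall (b ω) r).Nonempty) ∧
      ∀ ω, dist (b ω) (c ω) < r + s := by
  obtain ⟨b, hb, hbP⟩ := exists_measurable_forall_of_exists_seq (TopologicalSpace.denseSeq X)
    (P := fun ω x => (Φ ω ∩ closedBall x r).Nonempty ∧ dist x (c ω) < r + s)
    (fun k => (hΦ _ _).inter (measurableSet_lt (measurable_const.dist hc) measurable_const))
    (fun ω => by
      obtain ⟨z, hzΦ, hzc⟩ := hcΦ ω
      obtain ⟨k, hk⟩ := (TopologicalSpace.denseRange_denseSeq X).exists_dist_lt z hr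
      refine ⟨k, ⟨z, hzΦ, hk.le⟩, ?_⟩
      calc dist _ (c ω) ≤ dist _ z + dist z (c ω) := dist_triangle _ _ _
        _ < r + s := by rw [dist_comm] at hk; exact add_lt_add_of_lt_of_le hk hzc)
  exact ⟨b, hb, fun ω => (hbP ω).1, fun ω => (hbP ω).2⟩

theorem exists_measurable_forall_mem [CompleteSpace X]
    (hne : ∀ ω, (Φ ω).Nonempty) (hcl : ∀ ω, IsClosed (Φ ω))
    (hΦ : ∀ x r, MeasurableSet {ω | (Φ ω ∩ closedBall x r).Nonempty}) :
    ∃ a : Ω → X, Measurable a ∧ ∀ ω, a ω ∈ Φ ω := by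
  let ε : ℕ → ℝ := fun m => (1 / 2) ^ m
  let IsApprox (m : ℕ) (b : Ω → X) : Prop :=
    Measurable b ∧ ∀ ω, (Φ ω ∩ closedBall (b ω) (ε m)).Nonempty
  obtain ⟨b₀, hb₀⟩ : ∃ b₀, IsApprox 0 b₀ := by
    refine exists_measurable_forall_of_exists_seq (TopologicalSpace.denseSeq X)
      (P := fun ω x => (Φ ω ∩ closedBall x (ε 0)).Nonempty) (fun k => hΦ _ _) (fun ω => ?_)
    obtain ⟨z, hz⟩ := hne ω
    obtain ⟨k, hk⟩ := (TopologicalSpace.denseRange_denseSeq X).exists_dist_lt z one_pos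
    exact ⟨k, z, hz, hk.le⟩
  have step : ∀ m b, IsApprox m b →
      ∃ b', IsApprox (m + 1) b' ∧ ∀ ω, dist (b' ω) (b ω) < ε (m + 1) + ε m := by
    intro m b ⟨hb, hbΦ⟩
    obtain ⟨b', hb', hb'Φ, hdist⟩ :=
      exists_measurable_closedBall_inter_nonempty hΦ hb (pow_pos one_half_pos _) hbΦ
    exact ⟨b', ⟨hb', hb'Φ⟩, hdist⟩
  choose! next hnext using step
  let b : ℕ → Ω → X := fun m => Nat.rec b₀ next m
  have hb : ∀ m, IsApprox m (b m) := fun m => Nat.rec hb₀ (fun m ih => (hnext m _ ih).1) m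
  have hdist : ∀ ω m, dist (b m ω) (b (m + 1) ω) ≤ 2 * (1 / 2) ^ m := by
    intro ω m
    have hε : ε (m + 1) + ε m ≤ 2 * (1 / 2) ^ m := by
      simp only [ε, pow_succ]; linarith [pow_pos (one_half_pos (α := ℝ)) m]
    rw [dist_comm]
    exact ((hnext m _ (hb m)).2 ω).le.trans hε
  choose a ha using fun ω => cauchySeq_tendsto_of_complete
    (cauchySeq_of_le_geometric (1 / 2) 2 (by norm_num) (hdist ω))
  refine ⟨a, measurable_of_tendsto_metrizable (fun m => (hb m).1) (tendsto_pi_nhds.2 ha),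
    fun ω => ?_⟩
  choose z hzΦ hzb using fun m => (hb m).2 ω
  refine (hcl ω).mem_of_tendsto ((ha ω).congr_dist ?_) (Eventually.of_forall hzΦ)
  exact squeeze_zero (fun _ => dist_nonneg) (fun m => (dist_comm _ _).trans_le (hzb m))
    (tendsto_pow_atTop_nhds_zero_of_lt_one (by norm_num) (by norm_num))

end MeasurableSelection

theorem spectrum.isClosed_setOf_inter_nonempty {𝕜 A : Type*} [NormedField 𝕜] [NormedRing A]
    [NormedAlgebra 𝕜 A] [CompleteSpace A] {K : Set 𝕜} (hK : IsCompact K) :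
    IsClosed {a : A | (spectrum 𝕜 a ∩ K).Nonempty} := by
  have hunits : IsOpen {p : A × 𝕜 | IsUnit (algebraMap 𝕜 A p.2 - p.1)} :=
    Units.isOpen.preimage (((continuous_algebraMap 𝕜 A).comp continuous_snd).sub continuous_fst)
  rw [← isOpen_compl_iff, isOpen_iff_eventually]
  intro a ha
  have hunit : ∀ z ∈ K, IsUnit (algebraMap 𝕜 A z - a) := fun z hz =>
    not_not.1 fun h => ha ⟨z, spectrum.mem_iff.2 h, hz⟩
  filter_upwards [hK.eventually_forall_of_forall_eventually
    (P := fun b z => IsUnit (algebraMap 𝕜 A z - b)) fun z hz =>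
      hunits.mem_nhds (x := (a, z)) (hunit z hz)] with b hb ⟨z, hzσ, hzK⟩
  exact spectrum.mem_iff.1 hzσ (hb z hzK)

theorem MeasureTheory.StronglyMeasurable.exists_measurable_mem_spectrum {Ω A : Type*}
    [MeasurableSpace Ω] [NormedRing A] [NormedAlgebra ℂ A] [CompleteSpace A] [Nontrivial A]
    {g : Ω → A} (hg : StronglyMeasurable g) :
    ∃ a : Ω → ℂ, Measurable a ∧ ∀ ω, a ω ∈ spectrum ℂ (g ω) := by
  borelize A
  exact exists_measurable_forall_mem (fun ω => spectrum.nonempty _)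
    (fun ω => spectrum.isClosed _) fun z r =>
      hg.measurable (spectrum.isClosed_setOf_inter_nonempty (isCompact_closedBall z r)).measurableSet

theorem memSpm_of_ae_mem_spectrum {Ω A : Type*} [MeasurableSpace Ω] {μ : Measure Ω} [NormedRing A]
    [NormedAlgebra ℂ A] {x : Ω → A} {a : Ω → ℂ} (ha : ∀ᵐ ω ∂μ, a ω ∈ spectrum ℂ (x ω)) :
    MemSpm μ x a := by
  rintro S - hS ⟨y, -, hy⟩
  refine hS.ne' (measure_eq_zero_iff_ae_notMem.2 ?_)
  filter_upwards [ha, hy] with ω haω hyω hωS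
  obtain ⟨hright, hleft⟩ := hyω hωS
  exact spectrum.mem_iff.1 haω
    ⟨⟨_, y ω, hright, hleft⟩, by rw [Algebra.algebraMap_eq_smul_one]⟩

theorem stmt7_general {Ω : Type*} [MeasurableSpace Ω] (μ : Measure Ω)
    {A : Type*} [NormedRing A] [NormedAlgebra ℂ A] [CompleteSpace A] [NormOneClass A]
    (x : Ω → A) (hx : AEStronglyMeasurable x μ) :
    ∃ a : Ω → ℂ, Measurable a ∧ MemSpm μ x a := by
  have : Nontrivial A := NormOneClass.nontrivial
  obtain ⟨a, ha, hspec⟩ := hx.stronglyMeasurable_mk.exists_measurable_mem_spectrum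
  exact ⟨a, ha, memSpm_of_ae_mem_spectrum (hx.ae_eq_mk.mono fun ω hω => hω ▸ hspec ω)⟩

/-- For every a.e. strongly measurable `x : Ω → A` the set `spm(x)` is
non-empty: there is a measurable `a : Ω → ℂ` such that for every measurable set `S`
with `μ S > 0` there is no a.e. strongly measurable `y` inverting `a·1 − x` a.e. on
`S`. (Non-emptiness part of Theorem 2.5.) -/
theorem stmt7 {Ω : Type*} [MeasurableSpace Ω] (μ : Measure Ω) [IsFiniteMeasure μ]
    (hμ : 0 < μ Set.univ)
    {A : Type*} [NormedRing A] [NormedAlgebra ℂ A] [CompleteSpace A] [NormOneClass A]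
    (x : Ω → A) (hx : AEStronglyMeasurable x μ) :
    ∃ a : Ω → ℂ, Measurable a ∧ MemSpm μ x a :=
  stmt7_general μ x hx
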